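/- Let T be a plane tree with n+1 vertices u_0 < u_1 < … < u_n in lexicographic order, with Łukasiewicz path W and height process H. Fix 0 ≤ i < j ≤ n and define j' as follows: j' = i if u_i is an ancestor of u_j, and otherwise j' ∈ (i, j] is the index of the unique child of the last common ancestor of u_i and u_j which is an ancestor of u_j. Then: (1) W(j') = min_{i ≤ k ≤ j} W(k); (2) H(j') = min_{i ≤ k ≤ j} H(k); and (3) H(j) − H(j') = #{ k ∈ {i, …, j−1} : W(k) = min_{k ≤ l ≤ j} W(l) }. -/

import Mathlib

open MeasureTheory ProbabilityTheory Filter Set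
open scoped ENNReal NNReal Topology BigOperators

attribute [local instance 10] Classical.propDecidable

noncomputable section

/-- A plane tree: a finite set of finite sequences of positive integers containing the empty
sequence (the root), closed under taking prefixes, and such that the children of each vertex
form an initial segment `u1, …, uk_u`. -/
structure PlaneTree where
  verts : Finset (List ℕ)
  root_mem : ([] : List ℕ) ∈ verts
  pos_entries : ∀ u ∈ verts, ∀ i ∈ u, 1 ≤ i
  prefix_closed : ∀ u ∈ verts, ∀ v : List ℕ, v <+: u → v ∈ verts
  children_interval : ∀ u ∈ verts, ∃ k : ℕ, ∀ i : ℕ, (u ++ [i]) ∈ verts ↔ 1 ≤ i ∧ i ≤ k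

namespace PlaneTree

instance : MeasurableSpace PlaneTree := ⊤

/-- The number of children `k_u` of a vertex. -/
def numChildren (T : PlaneTree) (u : List ℕ) : ℕ :=
  (T.verts.filter fun w => ∃ i : ℕ, w = u ++ [i]).card

/-- The vertices listed in lexicographic (depth-first) order `u_0 < u_1 < … < u_n`. -/
def vertexList (T : PlaneTree) : List (List ℕ) :=
  T.verts.sort (· ≤ ·)

/-- The `j`-th vertex in lexicographic order. -/
def vertex (T : PlaneTree) (j : ℕ) : List ℕ := T.vertexList.getD j ([] : List ℕ)

/-- The height process at integer times: `H(j) = |u_j|`. -/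
def height (T : PlaneTree) (j : ℕ) : ℕ := (T.vertex j).length

/-- The Łukasiewicz path: `W(0) = 0`, `W(j+1) = W(j) + k_{u_j} - 1`. -/
def lukas (T : PlaneTree) : ℕ → ℤ
  | 0 => 0
  | j + 1 => lukas T j + T.numChildren (T.vertex j) - 1

/-- Total path length `Λ(T) = Σ_{u ∈ T} |u|`. -/
def pathLength (T : PlaneTree) : ℕ := ∑ u ∈ T.verts, u.length

end PlaneTree

/-- Linear interpolation between integer times of `f : ℕ → ℝ`, valid on `[0, M]`. -/
def interp (M : ℕ) (f : ℕ → ℝ) (t : ℝ) : ℝ :=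
  f 0 + ∑ k ∈ Finset.range M, (f (k + 1) - f k) * min (max (t - (k : ℝ)) 0) 1

namespace PlaneTree

/-- The height process, extended to real arguments by linear interpolation. -/
def heightFun (T : PlaneTree) (t : ℝ) : ℝ :=
  interp T.verts.card (fun j => (T.height j : ℝ)) t

/-- The Bienaymé–Galton–Watson weight `Π_{u ∈ T} μ(k_u)` of a plane tree. -/
def bgwWeight (μ : Measure ℕ) (T : PlaneTree) : ℝ≥0∞ :=
  ∏ u ∈ T.verts, μ {T.numChildren u}

/-- The total weight of plane trees with `n+1` vertices. -/
def bgwPartition (μ : Measure ℕ) (n : ℕ) : ℝ≥0∞ :=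
  ∑' T : {T : PlaneTree // T.verts.card = n + 1}, bgwWeight μ T.1

/-- `P` is the law of a Bienaymé–Galton–Watson tree with offspring distribution `μ`
conditioned to have `n+1` vertices. -/
def IsCondBGW (μ : Measure ℕ) (n : ℕ) (P : Measure PlaneTree) : Prop :=
  IsProbabilityMeasure P ∧
    ∀ T : PlaneTree, P {T} =
      (if T.verts.card = n + 1 then bgwWeight μ T else 0) / bgwPartition μ n

end PlaneTree

open PlaneTree

/-- The law of `ξ_1 + … + ξ_n` where the `ξ_i` are i.i.d. with law `μ`. -/
def sumLaw (μ : Measure ℕ) : ℕ → Measure ℕ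
  | 0 => Measure.dirac 0
  | n + 1 => (sumLaw μ n).bind fun s => μ.map fun k => s + k

/-- The standing assumptions on the offspring distribution `μ`: it is a probability measure on
`ℕ` with `μ(0) > 0`, mean `1`, aperiodic (its support generates the group `ℤ`), and it belongs
to the domain of attraction of an `α`-stable law with normalizing increasing sequence `B_n`:
`(ξ_1 + … + ξ_n - n)/B_n` converges in distribution to a random variable `X` with
`E[exp(-λ X)] = exp(λ^α)` for all `λ ≥ 0`. -/
structure OffspringHyp (μ : Measure ℕ) (α : ℝ) (B : ℕ → ℝ) : Prop where
  prob : IsProbabilityMeasure μ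
  pos0 : 0 < μ {0}
  mean_one : (∑' k : ℕ, (k : ℝ≥0∞) * μ {k}) = 1
  aperiodic : AddSubgroup.closure ((fun k : ℕ => (k : ℤ)) '' {k : ℕ | μ {k} ≠ 0}) = ⊤
  alpha_mem : α ∈ Ioc (1 : ℝ) 2
  B_mono : StrictMono B
  B_pos : ∀ n, 0 < B n
  attract : ∃ ν : Measure ℝ, IsProbabilityMeasure ν ∧
    (∀ l : ℝ, 0 ≤ l → ∫ x, Real.exp (-l * x) ∂ν = Real.exp (l ^ α)) ∧
    ∀ f : BoundedContinuousFunction ℝ ℝ,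
      Tendsto (fun n : ℕ =>
          ∫ x, f x ∂((sumLaw μ n).map fun s : ℕ => ((s : ℝ) - n) / B n))
        atTop (𝓝 (∫ x, f x ∂ν))

/-- The longest common prefix of two lists. -/
def lcp : List ℕ → List ℕ → List ℕ
  | a :: as, b :: bs => if a = b then a :: lcp as bs else []
  | _, _ => []

/-!
The Łukasiewicz path counts the vertices waiting to be visited: `W(m)` is the number of younger
siblings of `u_m` and of its ancestors, since passing from `u_m` to `u_{m+1}` adds the children of
`u_m` to this stack and removes `u_{m+1}`. If `x` lies in the subtree of `p` or of an elder sibling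
of `p`, every vertex waiting at `p` is still waiting at `x`, so `W` is smaller at `p` than at `x`;
strictly so if `x` lies below a strictly elder sibling of `p`, as `p` itself is then waiting.

All of `u_i, …, u_j` lie in the subtree of `u_{j'}` or of an elder sibling of it, which gives (1)
and (2). In (3), `W(k) = min_{k ≤ l ≤ j} W(l)` holds exactly when `u_k` is an ancestor of `u_j`:
otherwise the child of their last common ancestor on the way to `u_j` is visited in between and has
a smaller `W`. The ancestors of `u_j` visited in `[i, j)` are those below `u_{j'}`, one per height
in `[H(j'), H(j))`.
-/

namespace List

variable {α : Type*} [LinearOrder α]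

theorem append_lt_append_left_iff {b s t : List α} : b ++ s < b ++ t ↔ s < t :=
  (show StrictMono (b ++ ·) from fun _ _ h => append_left_lt h).lt_iff_lt

theorem append_cons_lt_append_singleton_iff {b t : List α} {d g : α} :
    b ++ d :: t < b ++ [g] ↔ d < g := by
  simp [append_lt_append_left_iff, cons_lt_cons_iff]

-- Mathlib's `≤` on lists is `= ∨ <`, not core's `¬ >` in which `IsPrefix.le` is stated.
theorem IsPrefix.le_lex {l₁ l₂ : List α} (h : l₁ <+: l₂) : l₁ ≤ l₂ :=
  not_lt.1 h.le

theorem IsPrefix.lt_of_length_lt {l₁ l₂ : List α} (h : l₁ <+: l₂)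
    (hlen : l₁.length < l₂.length) : l₁ < l₂ :=
  h.le_lex.lt_of_ne (by rintro rfl; exact hlen.false)

theorem exists_append_cons_of_lt_of_not_prefix {l₁ l₂ : List α} (h : l₁ < l₂)
    (hpre : ¬ l₁ <+: l₂) :
    ∃ a c₁ c₂ s₁ s₂,
      c₁ < c₂ ∧ l₁ = a ++ c₁ :: s₁ ∧ l₂ = a ++ c₂ :: s₂ := by
  induction h with
  | nil => exact absurd nil_prefix hpre
  | @cons c l₁ l₂ _ ih =>
    obtain ⟨a, c₁, c₂, s₁, s₂, hc, rfl, rfl⟩ := ih (by simpa using hpre)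
    exact ⟨c :: a, c₁, c₂, s₁, s₂, hc, rfl, rfl⟩
  | rel hc => exact ⟨[], _, _, _, _, hc, rfl, rfl⟩

theorem IsPrefix.prefix_of_le_of_le {b x w : List α} (hbw : b <+: w) (hbx : b ≤ x)
    (hxw : x ≤ w) : b <+: x := by
  by_contra hpre
  obtain ⟨a, c₁, c₂, s₁, s₂, hc, rfl, rfl⟩ :=
    exists_append_cons_of_lt_of_not_prefix (hbx.lt_of_ne (by rintro rfl; simp at hpre)) hpre
  obtain ⟨r, rfl⟩ := hbw
  refine hxw.not_gt ?_
  simpa [append_lt_append_left_iff, cons_lt_cons_iff] using Or.inl hc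

theorem exists_eq_append_cons_of_lt_of_le {a x s : List α} {c : α} (hax : a < x)
    (hxa : x ≤ a ++ c :: s) : ∃ e t, x = a ++ e :: t ∧ e ≤ c := by
  obtain ⟨r, rfl⟩ := (prefix_append a (c :: s)).prefix_of_le_of_le hax.le hxa
  obtain _ | ⟨e, t⟩ := r
  · simp at hax
  refine ⟨e, t, rfl, not_lt.1 fun hce => hxa.not_gt ?_⟩
  simpa [append_lt_append_left_iff, cons_lt_cons_iff] using Or.inl hce

end List

theorem lcp_append_cons {c₁ c₂ : ℕ} (hc : c₁ ≠ c₂) (s₁ s₂ : List ℕ) :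
    ∀ a : List ℕ, lcp (a ++ c₁ :: s₁) (a ++ c₂ :: s₂) = a
  | [] => by simp [lcp, hc]
  | b :: a => by simp [lcp, lcp_append_cons hc s₁ s₂ a]

/-- `x` lies in the subtree of `p` or in the subtree of an elder sibling of `p`. -/
def InSubtreeOrElder (p x : List ℕ) : Prop :=
  p <+: x ∨ ∃ a c e s, p = a ++ [c] ∧ x = a ++ e :: s ∧ e < c

theorem inSubtreeOrElder_append_cons {a s : List ℕ} {c e : ℕ} (h : e ≤ c) :
    InSubtreeOrElder (a ++ [c]) (a ++ e :: s) := by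
  obtain rfl | h := h.eq_or_lt
  · exact Or.inl ⟨s, by simp⟩
  · exact Or.inr ⟨a, c, e, s, rfl, rfl, h⟩

theorem InSubtreeOrElder.length_le {p x : List ℕ} (h : InSubtreeOrElder p x) :
    p.length ≤ x.length := by
  obtain h | ⟨a, c, e, s, rfl, rfl, -⟩ := h
  · exact h.length_le
  · simp

namespace PlaneTree

variable (T : PlaneTree) {i j j' k l m : ℕ}

theorem vertex_eq_orderEmbOfFin (hm : m < T.verts.card) :
    T.vertex m = T.verts.orderEmbOfFin rfl ⟨m, hm⟩ := by
  rw [Finset.orderEmbOfFin_apply]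
  exact List.getD_eq_getElem _ _ _

theorem vertex_mem (hm : m < T.verts.card) : T.vertex m ∈ T.verts := by
  rw [T.vertex_eq_orderEmbOfFin hm]
  exact Finset.orderEmbOfFin_mem _ _ _

theorem vertex_lt_vertex_iff (hk : k < T.verts.card) (hl : l < T.verts.card) :
    T.vertex k < T.vertex l ↔ k < l := by
  rw [T.vertex_eq_orderEmbOfFin hk, T.vertex_eq_orderEmbOfFin hl, OrderEmbedding.lt_iff_lt,
    Fin.mk_lt_mk]

theorem vertex_le_vertex_iff (hk : k < T.verts.card) (hl : l < T.verts.card) :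
    T.vertex k ≤ T.vertex l ↔ k ≤ l := by
  rw [T.vertex_eq_orderEmbOfFin hk, T.vertex_eq_orderEmbOfFin hl, OrderEmbedding.le_iff_le,
    Fin.mk_le_mk]

theorem vertex_inj (hk : k < T.verts.card) (hl : l < T.verts.card) :
    T.vertex k = T.vertex l ↔ k = l := by
  rw [T.vertex_eq_orderEmbOfFin hk, T.vertex_eq_orderEmbOfFin hl, OrderEmbedding.eq_iff_eq,
    Fin.mk.injEq]

theorem exists_vertex_eq {v : List ℕ} (hv : v ∈ T.verts) :
    ∃ m < T.verts.card, T.vertex m = v := by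
  obtain ⟨⟨m, hm⟩, rfl⟩ : v ∈ Set.range (T.verts.orderEmbOfFin rfl) := by
    rwa [Finset.range_orderEmbOfFin]
  exact ⟨m, hm, T.vertex_eq_orderEmbOfFin hm⟩

theorem vertex_zero (h : 0 < T.verts.card) : T.vertex 0 = [] := by
  obtain ⟨m, hm, hv⟩ := T.exists_vertex_eq T.root_mem
  have h0 := (T.vertex_le_vertex_iff h hm).2 m.zero_le
  rw [hv] at h0
  exact h0.antisymm (not_lt.1 (List.not_lt_nil _))

theorem vertex_lt_iff_vertex_succ_le (hm : m + 1 < T.verts.card) {v : List ℕ}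
    (hv : v ∈ T.verts) : T.vertex m < v ↔ T.vertex (m + 1) ≤ v := by
  obtain ⟨l, hl, rfl⟩ := T.exists_vertex_eq hv
  rw [T.vertex_lt_vertex_iff (by omega) hl, T.vertex_le_vertex_iff hm hl]
  omega

theorem vertex_prefix_of_le_of_le (hkj : T.vertex k <+: T.vertex j) (hkl : k ≤ l) (hlj : l ≤ j)
    (hj : j < T.verts.card) : T.vertex k <+: T.vertex l :=
  hkj.prefix_of_le_of_le ((T.vertex_le_vertex_iff (by omega) (by omega)).2 hkl)
    ((T.vertex_le_vertex_iff (by omega) hj).2 hlj)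

def children (u : List ℕ) : Finset (List ℕ) :=
  T.verts.filter fun w => ∃ i : ℕ, w = u ++ [i]

/-- The younger siblings of `u` and of its ancestors. -/
def pending (u : List ℕ) : Finset (List ℕ) :=
  T.verts.filter fun v => v.dropLast < u ∧ u < v

theorem pending_nil : T.pending [] = ∅ := by
  simp [pending]

theorem not_mem_pending_self (u : List ℕ) : u ∉ T.pending u := by
  simp [pending]

theorem disjoint_pending_children (u : List ℕ) : Disjoint (T.pending u) (T.children u) := by
  simp only [pending, children, Finset.disjoint_filter]
  rintro v - ⟨h, -⟩ ⟨i, rfl⟩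
  simp at h

theorem pending_union_children (u : List ℕ) :
    T.pending u ∪ T.children u = T.verts.filter fun v => v.dropLast ≤ u ∧ u < v := by
  ext v
  simp only [pending, children, Finset.mem_union, Finset.mem_filter]
  constructor
  · rintro (⟨hv, hlt, huv⟩ | ⟨hv, i, rfl⟩)
    · exact ⟨hv, hlt.le, huv⟩
    · exact ⟨hv, by simp, (List.prefix_append u [i]).lt_of_length_lt (by simp)⟩
  · rintro ⟨hv, hle, huv⟩
    obtain hlt | rfl := hle.lt_or_eq
    · exact Or.inl ⟨hv, hlt, huv⟩
    obtain rfl | ⟨w, i, rfl⟩ := v.eq_nil_or_concat'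
    · simp at huv
    · exact Or.inr ⟨hv, i, by simp⟩

theorem insert_vertex_succ_pending (hm : m + 1 < T.verts.card) :
    insert (T.vertex (m + 1)) (T.pending (T.vertex (m + 1))) =
      T.verts.filter fun v => v.dropLast ≤ T.vertex m ∧ T.vertex m < v := by
  have hmem := T.vertex_mem hm
  have hsucc : T.vertex m < T.vertex (m + 1) :=
    (T.vertex_lt_vertex_iff (by omega) hm).2 m.lt_succ_self
  have hparent {v : List ℕ} (hv : v ∈ T.verts) :
      v.dropLast ≤ T.vertex m ↔ v.dropLast < T.vertex (m + 1) := by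
    rw [← not_iff_not, not_le, not_lt]
    exact T.vertex_lt_iff_vertex_succ_le hm (T.prefix_closed v hv _ v.dropLast_prefix)
  ext v
  simp only [pending, Finset.mem_insert, Finset.mem_filter]
  constructor
  · rintro (rfl | ⟨hv, hlt, huv⟩)
    · have hne : T.vertex (m + 1) ≠ [] := by
        rintro h
        simp [h] at hsucc
      refine ⟨hmem, (hparent hmem).2 ((List.dropLast_prefix _).lt_of_length_lt ?_), hsucc⟩
      simpa using List.length_pos_iff.2 hne
    · exact ⟨hv, (hparent hv).2 hlt, hsucc.trans huv⟩
  · rintro ⟨hv, hle, huv⟩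
    obtain heq | hlt := ((T.vertex_lt_iff_vertex_succ_le hm hv).1 huv).eq_or_lt
    · exact Or.inl heq.symm
    · exact Or.inr ⟨hv, (hparent hv).1 hle, hlt⟩

theorem lukas_eq_card_pending : ∀ m < T.verts.card, T.lukas m = (T.pending (T.vertex m)).card
  | 0, h => by simp [lukas, T.vertex_zero h, pending_nil]
  | m + 1, hm => by
    have hcard := congrArg Finset.card (T.insert_vertex_succ_pending hm)
    rw [Finset.card_insert_of_notMem (T.not_mem_pending_self _), ← pending_union_children,
      Finset.card_union_of_disjoint (T.disjoint_pending_children _)] at hcard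
    rw [lukas, lukas_eq_card_pending m (by omega)]
    change _ + ((T.children _).card : ℤ) - 1 = _
    omega

theorem pending_mono {a s : List ℕ} {c e : ℕ} (h : e ≤ c) :
    T.pending (a ++ [c]) ⊆ T.pending (a ++ e :: s) := by
  intro v hv
  simp only [pending, Finset.mem_filter] at hv ⊢
  obtain ⟨hvT, hlt, hgt⟩ := hv
  obtain rfl | ⟨b, g, rfl⟩ := v.eq_nil_or_concat'
  · simp at hgt
  rw [List.dropLast_concat] at hlt ⊢
  have hba : b <+: a := by
    have := (List.prefix_append b [g]).prefix_of_le_of_le hlt.le hgt.le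
    exact (List.prefix_concat_iff.1 this).resolve_left hlt.ne
  obtain ⟨r, rfl⟩ := hba
  refine ⟨hvT, List.IsPrefix.lt_of_length_lt ⟨r ++ e :: s, by simp⟩ (by simp), ?_⟩
  obtain _ | ⟨d, t⟩ := r
  · simp only [List.append_nil, List.append_cons_lt_append_singleton_iff] at hgt ⊢
    exact h.trans_lt hgt
  · simpa [List.append_cons_lt_append_singleton_iff] using hgt

theorem pending_subset_of_inSubtreeOrElder {p x : List ℕ} (h : InSubtreeOrElder p x) :
    T.pending p ⊆ T.pending x := by
  obtain ⟨s, rfl⟩ | ⟨a, c, e, s, rfl, rfl, hec⟩ := h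
  · obtain rfl | ⟨a, c, rfl⟩ := p.eq_nil_or_concat'
    · simp [pending_nil]
    · simpa using T.pending_mono (a := a) (s := s) le_rfl
  · exact T.pending_mono hec.le

theorem pending_ssubset {a s : List ℕ} {c e : ℕ} (h : e < c) (hmem : a ++ [c] ∈ T.verts) :
    T.pending (a ++ [c]) ⊂ T.pending (a ++ e :: s) := by
  refine (Finset.ssubset_iff_of_subset (T.pending_mono h.le)).2
    ⟨a ++ [c], ?_, T.not_mem_pending_self _⟩
  simp only [pending, Finset.mem_filter, List.dropLast_concat]
  exact ⟨hmem, List.IsPrefix.lt_of_length_lt ⟨e :: s, rfl⟩ (by simp),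
    List.append_cons_lt_append_singleton_iff.2 h⟩

theorem lukas_le_lukas_of_inSubtreeOrElder (hm : m < T.verts.card) (hk : k < T.verts.card)
    (h : InSubtreeOrElder (T.vertex m) (T.vertex k)) : T.lukas m ≤ T.lukas k := by
  rw [T.lukas_eq_card_pending m hm, T.lukas_eq_card_pending k hk]
  exact_mod_cast Finset.card_le_card (T.pending_subset_of_inSubtreeOrElder h)

theorem forall_lukas_le_iff_prefix (hkj : k ≤ j) (hj : j < T.verts.card) :
    (∀ l ∈ Finset.Icc k j, T.lukas k ≤ T.lukas l) ↔ T.vertex k <+: T.vertex j := by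
  refine ⟨fun hmin => ?_, fun hpre l hl => ?_⟩
  · by_contra hnpre
    have hlt : T.vertex k < T.vertex j :=
      (T.vertex_le_vertex_iff (by omega) hj).2 hkj |>.lt_of_ne (by rintro h; simp [h] at hnpre)
    obtain ⟨a, c₁, c₂, s₁, s₂, hc, hk, hj'⟩ :=
      List.exists_append_cons_of_lt_of_not_prefix hlt hnpre
    have hq : a ++ [c₂] <+: T.vertex j := ⟨s₂, by simp [hj']⟩
    obtain ⟨m, hm, hmq⟩ := T.exists_vertex_eq (T.prefix_closed _ (T.vertex_mem hj) _ hq)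
    have hkm : k ≤ m := by
      rw [← T.vertex_le_vertex_iff (by omega) hm, hmq, hk]
      exact (List.append_cons_lt_append_singleton_iff.2 hc).le
    have hmj : m ≤ j := by
      rw [← T.vertex_le_vertex_iff hm hj, hmq]
      exact hq.le_lex
    have hW : T.lukas m < T.lukas k := by
      rw [T.lukas_eq_card_pending m hm, T.lukas_eq_card_pending k (by omega), hmq, hk]
      exact_mod_cast Finset.card_lt_card (T.pending_ssubset hc (hmq ▸ T.vertex_mem hm))
    exact (hmin m (Finset.mem_Icc.2 ⟨hkm, hmj⟩)).not_gt hW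
  · rw [Finset.mem_Icc] at hl
    exact T.lukas_le_lukas_of_inSubtreeOrElder (by omega) (by omega)
      (Or.inl (T.vertex_prefix_of_le_of_le hpre hl.1 hl.2 hj))

theorem card_filter_prefix_Ico (hkj : k ≤ j) (hj : j < T.verts.card)
    (hpre : T.vertex k <+: T.vertex j) :
    ((Finset.Ico k j).filter fun l => T.vertex l <+: T.vertex j).card =
      (T.vertex j).length - (T.vertex k).length := by
  rw [← Nat.card_Ico]
  refine Finset.card_nbij (fun l => (T.vertex l).length) ?_ ?_ ?_
  · intro l hl
    simp only [Finset.coe_filter, Finset.coe_Ico, Finset.mem_Ico, Set.mem_Ico,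
      Set.mem_ofPred_eq] at hl ⊢
    obtain ⟨⟨hkl, hlj⟩, hl⟩ := hl
    refine ⟨(T.vertex_prefix_of_le_of_le hpre hkl hlj.le hj).length_le,
      hl.length_le.lt_of_ne fun h => ?_⟩
    exact hlj.ne ((T.vertex_inj (by omega) hj).1 (hl.eq_of_length h))
  · intro l hl l' hl' h
    simp only [Finset.coe_filter, Finset.mem_Ico, Set.mem_ofPred_eq] at hl hl'
    refine (T.vertex_inj (by omega) (by omega)).1 ?_
    exact (List.prefix_of_prefix_length_le hl.2 hl'.2 h.le).eq_of_length h
  · intro d hd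
    simp only [Finset.coe_Ico, Set.mem_Ico] at hd
    have htake : (T.vertex j).take d <+: T.vertex j := List.take_prefix _ _
    obtain ⟨m, hm, hmd⟩ := T.exists_vertex_eq (T.prefix_closed _ (T.vertex_mem hj) _ htake)
    have hlen : (T.vertex m).length = d := by rw [hmd, List.length_take]; omega
    refine ⟨m, ?_, hlen⟩
    simp only [Finset.coe_filter, Finset.mem_Ico, Set.mem_ofPred_eq]
    refine ⟨⟨?_, ?_⟩, hmd ▸ htake⟩
    · rw [← T.vertex_le_vertex_iff (by omega) hm, hmd]
      exact (List.prefix_take_iff.2 ⟨hpre, hd.1⟩).le_lex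
    · rw [← T.vertex_lt_vertex_iff hm hj, hmd]
      exact htake.lt_of_length_lt (by rw [List.length_take]; omega)

theorem lukas_height_minima_of_inSubtreeOrElder (hij : i ≤ j) (hj : j < T.verts.card)
    (hij' : i ≤ j') (hj'j : j' ≤ j) (hpre : T.vertex j' <+: T.vertex j)
    (hsub : ∀ k ∈ Finset.Icc i j, InSubtreeOrElder (T.vertex j') (T.vertex k)) :
    T.lukas j' = (Finset.Icc i j).inf' (Finset.nonempty_Icc.mpr hij) T.lukas ∧
      T.height j' = (Finset.Icc i j).inf' (Finset.nonempty_Icc.mpr hij) T.height ∧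
      (T.height j : ℤ) - T.height j' =
        ((Finset.Ico i j).filter fun k =>
          ∀ l ∈ Finset.Icc k j, T.lukas k ≤ T.lukas l).card := by
  have hj'mem : j' ∈ Finset.Icc i j := Finset.mem_Icc.2 ⟨hij', hj'j⟩
  have hk {k} (hk : k ∈ Finset.Icc i j) : k < T.verts.card := (Finset.mem_Icc.1 hk).2.trans_lt hj
  refine ⟨le_antisymm (Finset.le_inf' _ _ fun k hk' =>
      T.lukas_le_lukas_of_inSubtreeOrElder (hk hj'mem) (hk hk') (hsub k hk'))
      (Finset.inf'_le _ hj'mem),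
    le_antisymm (Finset.le_inf' _ _ fun k hk' => (hsub k hk').length_le) (Finset.inf'_le _ hj'mem),
    ?_⟩
  have hfilter :
      ((Finset.Ico i j).filter fun k => ∀ l ∈ Finset.Icc k j, T.lukas k ≤ T.lukas l) =
        (Finset.Ico j' j).filter fun k => T.vertex k <+: T.vertex j := by
    ext k
    simp only [Finset.mem_filter, Finset.mem_Ico]
    constructor
    · rintro ⟨⟨hik, hkj⟩, hmin⟩
      have hkpre := (T.forall_lukas_le_iff_prefix hkj.le hj).1 hmin
      have hj'k : T.vertex j' <+: T.vertex k := List.prefix_of_prefix_length_le hpre hkpre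
        (hsub k (Finset.mem_Icc.2 ⟨hik, hkj.le⟩)).length_le
      exact ⟨⟨(T.vertex_le_vertex_iff (by omega) (by omega)).1 hj'k.le_lex, hkj⟩, hkpre⟩
    · rintro ⟨⟨hj'k, hkj⟩, hkpre⟩
      exact ⟨⟨hij'.trans hj'k, hkj⟩, (T.forall_lukas_le_iff_prefix hkj.le hj).2 hkpre⟩
  rw [hfilter, T.card_filter_prefix_Ico hj'j hj hpre, height, height, Nat.cast_sub hpre.length_le]

end PlaneTree

/-- **Minima of the Łukasiewicz path and of the height process between two times.**
For `i < j ≤ n`, letting `j' = i` if `u_i` is an ancestor of `u_j` and otherwise `j' ∈ (i,j]`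
the index of the child of the last common ancestor of `u_i` and `u_j` which is an ancestor of
`u_j`, one has `W(j') = min_{i ≤ k ≤ j} W(k)`, `H(j') = min_{i ≤ k ≤ j} H(k)` and
`H(j) - H(j') = #{k ∈ {i,…,j-1} : W(k) = min_{k ≤ l ≤ j} W(l)}`. -/
theorem lukasiewicz_height_minima
    (T : PlaneTree) (n : ℕ) (hn : T.verts.card = n + 1)
    (i j : ℕ) (hij : i < j) (hj : j ≤ n) (j' : ℕ)
    (h1 : T.vertex i <+: T.vertex j → j' = i)
    (h2 : ¬ T.vertex i <+: T.vertex j →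
      i < j' ∧ j' ≤ j ∧
        T.vertex j' = (T.vertex j).take ((lcp (T.vertex i) (T.vertex j)).length + 1)) :
    T.lukas j' = (Finset.Icc i j).inf' (Finset.nonempty_Icc.mpr hij.le) T.lukas ∧
      T.height j' = (Finset.Icc i j).inf' (Finset.nonempty_Icc.mpr hij.le) T.height ∧
      (T.height j : ℤ) - T.height j' =
        ((Finset.Ico i j).filter fun k =>
          ∀ l ∈ Finset.Icc k j, T.lukas k ≤ T.lukas l).card := by
  have hjT : j < T.verts.card := by omega
  by_cases hanc : T.vertex i <+: T.vertex j
  · obtain rfl := h1 hanc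
    refine T.lukas_height_minima_of_inSubtreeOrElder hij.le hjT le_rfl hij.le hanc fun k hk => ?_
    rw [Finset.mem_Icc] at hk
    exact Or.inl (T.vertex_prefix_of_le_of_le hanc hk.1 hk.2 hjT)
  obtain ⟨hij', hj'j, hj'⟩ := h2 hanc
  have hvij := (T.vertex_lt_vertex_iff (hij.trans hjT) hjT).2 hij
  obtain ⟨a, c₁, c₂, s₁, s₂, hc, hvi, hvj⟩ :=
    List.exists_append_cons_of_lt_of_not_prefix hvij hanc
  have hvj' : T.vertex j' = a ++ [c₂] := by
    rw [hj', hvi, hvj, lcp_append_cons hc.ne, List.take_append]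
    simp
  refine T.lukas_height_minima_of_inSubtreeOrElder hij.le hjT hij'.le hj'j
    (by rw [hvj', hvj]; exact ⟨s₂, by simp⟩) fun k hk => ?_
  rw [Finset.mem_Icc] at hk
  have hak : a < T.vertex k := calc
    a < T.vertex i := by rw [hvi]; exact List.IsPrefix.lt_of_length_lt ⟨_, rfl⟩ (by simp)
    _ ≤ T.vertex k := (T.vertex_le_vertex_iff (by omega) (by omega)).2 hk.1
  obtain ⟨e, t, hvk, he⟩ := List.exists_eq_append_cons_of_lt_of_le hak
    (hvj ▸ (T.vertex_le_vertex_iff (by omega) hjT).2 hk.2)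
  rw [hvj', hvk]
  exact inSubtreeOrElder_append_cons he

end
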